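/- Let p ∈ (1,∞) and δ ≥ 0, and let S(P) = (δ+|P^sym|)^{p−2} P^sym. Then S is continuously differentiable on the set of 3×3 matrices P with P^sym ≠ 0 (and on all of ℝ^{3×3} if δ > 0), and there exist constants κ₀, κ₁ > 0 depending only on p (independent of δ) such that for all P with P^sym ≠ 0 and all 3×3 matrices Q one has ∑_{i,j,k,l} ∂_{kl} S_{ij}(P) Q_{ij} Q_{kl} ≥ κ₀·φ''(|P^sym|)·|Q^sym|² and |∂_{kl} S_{ij}(P)| ≤ κ₁·φ''(|P^sym|) for all indices i,j,k,l; i.e., S has (p,δ)-structure with characteristics depending only on p. -/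

import Mathlib

/-- 3×3 real matrices, represented as functions. -/
abbrev M3 : Type := Fin 3 → Fin 3 → ℝ

/-- Symmetric part `P^sym = (P + Pᵀ)/2`. -/
noncomputable def sym3 (P : M3) : M3 := fun i j => (P i j + P j i) / 2

/-- Frobenius norm. -/
noncomputable def frob3 (P : M3) : ℝ := Real.sqrt (∑ i, ∑ j, (P i j) ^ 2)

/-- Frobenius inner product `A·B = ∑_{ij} A_{ij} B_{ij}`. -/
noncomputable def dotF (A B : M3) : ℝ := ∑ i, ∑ j, A i j * B i j

/-- The stress tensor `S(P) = (δ+|P^sym|)^{p−2} P^sym`. -/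
noncomputable def Smat (p δ : ℝ) (P : M3) : M3 :=
  fun i j => (δ + frob3 (sym3 P)) ^ (p - 2) * sym3 P i j

/-- `φ''(t) = (δ+t)^(p-2) + (p-2)(δ+t)^(p-3)·t`. -/
noncomputable def phiSecond (p δ t : ℝ) : ℝ :=
  (δ + t) ^ (p - 2) + (p - 2) * (δ + t) ^ (p - 3) * t

/-!
On the symmetric part, `S` is the radial map `x ↦ (δ + |x|)^(p-2) x` of the Euclidean space
`ℝ^(3×3)`. For `x ≠ 0` its derivative is `(δ + |x|)^(p-2)` on `x^⊥` and `φ''(|x|)` on `ℝ x`, and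
since `φ''(t) = (δ + t)^(p-3) (δ + (p-1) t)`, the eigenvalue `(δ + |x|)^(p-2)` lies between
`min(1, 1/(p-1)) φ''` and `max(1, 1/(p-1)) φ''`; this gives both the coercivity and the entry
bound. For `δ > 0` the derivative extends continuously by `δ^(p-2) id` to `x = 0`, because its
rank-one part has norm `|p-2| (δ + |x|)^(p-3) |x|`.
-/

open Filter Topology InnerProductSpace
open scoped RealInnerProductSpace

theorem min_one_inv_mul_add_le {r a b : ℝ} (hr : 0 < r) (ha : 0 ≤ a) (hb : 0 ≤ b) :
    min 1 r⁻¹ * (a + r * b) ≤ a + b := by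
  have h1 : min 1 r⁻¹ ≤ 1 := min_le_left _ _
  have h2 : min 1 r⁻¹ * r ≤ 1 :=
    (mul_le_mul_of_nonneg_right (min_le_right _ _) hr.le).trans_eq (inv_mul_cancel₀ hr.ne')
  nlinarith

theorem add_le_max_one_inv_mul_add {r a b : ℝ} (hr : 0 < r) (ha : 0 ≤ a) (hb : 0 ≤ b) :
    a + b ≤ max 1 r⁻¹ * (a + r * b) := by
  have h1 : 1 ≤ max 1 r⁻¹ := le_max_left _ _
  have h2 : 1 ≤ max 1 r⁻¹ * r :=
    (inv_mul_cancel₀ hr.ne').symm.trans_le (mul_le_mul_of_nonneg_right (le_max_right _ _) hr.le)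
  nlinarith

section PhiSecond

variable {δ t : ℝ}

theorem rpow_sub_two_eq (hδt : 0 < δ + t) (p : ℝ) :
    (δ + t) ^ (p - 2) = (δ + t) ^ (p - 3) * (δ + t) := by
  rw [← Real.rpow_add_one hδt.ne']
  ring_nf

theorem phiSecond_eq (hδt : 0 < δ + t) (p : ℝ) :
    phiSecond p δ t = (δ + t) ^ (p - 3) * (δ + (p - 1) * t) := by
  rw [phiSecond, rpow_sub_two_eq hδt]
  ring

theorem phiSecond_nonneg {p : ℝ} (hp : 1 < p) (hδ : 0 ≤ δ) (ht : 0 ≤ t) (hδt : 0 < δ + t) :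
    0 ≤ phiSecond p δ t := by
  rw [phiSecond_eq hδt]
  have : 0 ≤ (p - 1) * t := mul_nonneg (by linarith) ht
  positivity

theorem min_one_inv_mul_phiSecond_le {p : ℝ} (hp : 1 < p) (hδ : 0 ≤ δ) (ht : 0 ≤ t)
    (hδt : 0 < δ + t) :
    min 1 (p - 1)⁻¹ * phiSecond p δ t ≤ (δ + t) ^ (p - 2) := by
  rw [phiSecond_eq hδt, rpow_sub_two_eq hδt, mul_left_comm]
  exact mul_le_mul_of_nonneg_left (min_one_inv_mul_add_le (by linarith) hδ ht)
    (Real.rpow_nonneg hδt.le _)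

theorem rpow_le_max_one_inv_mul_phiSecond {p : ℝ} (hp : 1 < p) (hδ : 0 ≤ δ) (ht : 0 ≤ t)
    (hδt : 0 < δ + t) : (δ + t) ^ (p - 2) ≤ max 1 (p - 1)⁻¹ * phiSecond p δ t := by
  rw [phiSecond_eq hδt, rpow_sub_two_eq hδt, mul_left_comm]
  exact mul_le_mul_of_nonneg_left (add_le_max_one_inv_mul_add (by linarith) hδ ht)
    (Real.rpow_nonneg hδt.le _)

end PhiSecond

theorem norm_inv_norm_smul_le_one {F : Type*} [NormedAddCommGroup F] [NormedSpace ℝ F] (x : F) :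
    ‖‖x‖⁻¹ • x‖ ≤ 1 := by
  rcases eq_or_ne x 0 with rfl | hx
  · simp
  · exact (norm_smul_inv_norm hx).le

theorem continuous_rpow_const_add_norm {F : Type*} [SeminormedAddCommGroup F] {δ : ℝ}
    (hδ : 0 < δ) (q : ℝ) : Continuous fun y : F => (δ + ‖y‖) ^ q :=
  (continuous_const.add continuous_norm).rpow_const fun y =>
    Or.inl (add_pos_of_pos_of_nonneg hδ (norm_nonneg y)).ne'

section StressMap

variable {E : Type*} [NormedAddCommGroup E] [InnerProductSpace ℝ E]

theorem hasFDerivAt_norm_of_ne_zero {x : E} (hx : x ≠ 0) :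
    HasFDerivAt (‖·‖) (innerSL ℝ (‖x‖⁻¹ • x)) x := by
  have hx' : 0 < ‖x‖ := norm_pos_iff.2 hx
  have h := (Real.hasDerivAt_sqrt (pow_pos hx' 2).ne').comp_hasFDerivAt x
    (hasStrictFDerivAt_norm_sq x).hasFDerivAt
  simp only [Function.comp_def, Real.sqrt_sq (norm_nonneg _)] at h
  refine h.congr_fderiv ?_
  ext y
  simp only [one_div, mul_inv_rev, smul_apply, coe_innerSL_apply, nsmul_eq_mul,
    Nat.cast_ofNat, smul_eq_mul, map_smul]
  field_simp

noncomputable def stressMap (p δ : ℝ) (x : E) : E := (δ + ‖x‖) ^ (p - 2) • x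

-- `‖x‖⁻¹ • x` is `0` at `x = 0`, where only the first term remains.
noncomputable def stressDeriv (p δ : ℝ) (x : E) : E →L[ℝ] E :=
  (δ + ‖x‖) ^ (p - 2) • ContinuousLinearMap.id ℝ E +
    (phiSecond p δ ‖x‖ - (δ + ‖x‖) ^ (p - 2)) • rankOne ℝ (‖x‖⁻¹ • x) (‖x‖⁻¹ • x)

theorem stressDeriv_apply (p δ : ℝ) (x y : E) :
    stressDeriv p δ x y = (δ + ‖x‖) ^ (p - 2) • y +
      (phiSecond p δ ‖x‖ - (δ + ‖x‖) ^ (p - 2)) • ⟪‖x‖⁻¹ • x, y⟫ • ‖x‖⁻¹ • x := by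
  simp only [stressDeriv, add_apply, smul_apply, rankOne_apply, ContinuousLinearMap.id_apply]

theorem stressDeriv_zero (p δ : ℝ) :
    stressDeriv p δ (0 : E) = δ ^ (p - 2) • ContinuousLinearMap.id ℝ E := by
  simp [stressDeriv]

theorem hasFDerivAt_stressMap (p : ℝ) {δ : ℝ} (hδ : 0 ≤ δ) {x : E} (hx : x ≠ 0) :
    HasFDerivAt (stressMap p δ) (stressDeriv p δ x) x := by
  have hx' : 0 < ‖x‖ := norm_pos_iff.2 hx
  have hG := (Real.hasDerivAt_rpow_const (p := p - 2) (Or.inl (by positivity))).comp_hasFDerivAt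
    x ((hasFDerivAt_norm_of_ne_zero hx).const_add δ)
  rw [show p - 2 - 1 = p - 3 by ring] at hG
  refine (hG.smul (hasFDerivAt_id x)).congr_fderiv ?_
  ext y
  simp only [stressDeriv_apply, add_apply, smul_apply, ContinuousLinearMap.smulRight_apply,
    ContinuousLinearMap.id_apply, Function.comp_apply, id, innerSL_apply_apply, phiSecond,
    real_inner_smul_left, smul_smul, smul_eq_mul]
  congr 2
  field_simp
  ring

theorem hasFDerivAt_stressMap_zero (p : ℝ) {δ : ℝ} (hδ : 0 < δ) :
    HasFDerivAt (stressMap p δ) (stressDeriv p δ 0) (0 : E) := by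
  refine .of_isLittleO ?_
  have hlim : Tendsto (fun y : E => (δ + ‖y‖) ^ (p - 2) - δ ^ (p - 2)) (𝓝 0) (𝓝 0) := by
    simpa using ((continuous_rpow_const_add_norm hδ (p - 2)).tendsto (0 : E)).sub_const
      (δ ^ (p - 2))
  have := ((Asymptotics.isLittleO_one_iff ℝ).2 hlim).smul_isBigO
    (Asymptotics.isBigO_refl (fun y : E => y) (𝓝 0))
  simpa [stressMap, stressDeriv_zero, sub_smul] using this

theorem contDiffAt_stressMap (p : ℝ) {δ : ℝ} (hδ : 0 ≤ δ) {x : E} (hx : x ≠ 0) :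
    ContDiffAt ℝ 1 (stressMap p δ) x := by
  have hx' : 0 < ‖x‖ := norm_pos_iff.2 hx
  exact ((Real.contDiffAt_rpow_const_of_ne (by positivity)).comp x
    (contDiffAt_const.add (contDiffAt_norm ℝ hx))).smul contDiffAt_id

theorem continuousAt_stressDeriv_zero (p : ℝ) {δ : ℝ} (hδ : 0 < δ) :
    ContinuousAt (stressDeriv p δ) (0 : E) := by
  set c : E → ℝ := fun y => phiSecond p δ ‖y‖ - (δ + ‖y‖) ^ (p - 2)
  have hc : Continuous c := by
    simp only [c, phiSecond]
    have := continuous_rpow_const_add_norm (F := E) hδ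
    fun_prop
  have hR : Tendsto (fun y : E => c y • rankOne ℝ (‖y‖⁻¹ • y) (‖y‖⁻¹ • y)) (𝓝 0) (𝓝 0) := by
    refine squeeze_zero_norm (a := fun y => |c y|) (fun y => ?_) ?_
    · rw [norm_smul, norm_rankOne, Real.norm_eq_abs]
      exact mul_le_of_le_one_right (abs_nonneg _)
        (mul_le_one₀ (norm_inv_norm_smul_le_one y) (norm_nonneg _) (norm_inv_norm_smul_le_one y))
    · simpa [c, phiSecond] using (hc.tendsto 0).abs
  have := (((continuous_rpow_const_add_norm hδ (p - 2)).tendsto (0 : E)).smul_const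
    (ContinuousLinearMap.id ℝ E)).add hR
  rw [norm_zero, add_zero, add_zero] at this
  rw [ContinuousAt, stressDeriv_zero]
  exact this

theorem contDiff_stressMap (p : ℝ) {δ : ℝ} (hδ : 0 < δ) :
    ContDiff ℝ 1 (stressMap (E := E) p δ) := by
  have hD : ∀ x : E, HasFDerivAt (stressMap p δ) (stressDeriv p δ x) x := fun x => by
    rcases eq_or_ne x 0 with rfl | hx
    · exact hasFDerivAt_stressMap_zero p hδ
    · exact hasFDerivAt_stressMap p hδ.le hx
  refine contDiff_one_iff_hasFDerivAt.2
    ⟨stressDeriv p δ, continuous_iff_continuousAt.2 fun x => ?_, hD⟩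
  rcases eq_or_ne x 0 with rfl | hx
  · exact continuousAt_stressDeriv_zero p hδ
  · have := (contDiffAt_stressMap p hδ.le hx).continuousAt_fderiv one_ne_zero
    rwa [show fderiv ℝ (stressMap p δ) = stressDeriv p δ from funext fun x => (hD x).fderiv]
      at this

theorem le_inner_stressDeriv_apply_self {p δ : ℝ} (hp : 1 < p) (hδ : 0 ≤ δ) {x : E}
    (hδx : 0 < δ + ‖x‖) (y : E) :
    min 1 (p - 1)⁻¹ * phiSecond p δ ‖x‖ * ‖y‖ ^ 2 ≤ ⟪stressDeriv p δ x y, y⟫ := by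
  set G := (δ + ‖x‖) ^ (p - 2)
  set φ := phiSecond p δ ‖x‖
  set s := ⟪‖x‖⁻¹ • x, y⟫
  have hDyy : ⟪stressDeriv p δ x y, y⟫ = G * (‖y‖ ^ 2 - s ^ 2) + φ * s ^ 2 := by
    rw [stressDeriv_apply, inner_add_left, real_inner_smul_left, real_inner_smul_left,
      real_inner_smul_left, real_inner_self_eq_norm_sq]
    ring
  have hs : s ^ 2 ≤ ‖y‖ ^ 2 := by
    refine sq_le_sq' (neg_le_of_abs_le ?_) (le_of_abs_le ?_) <;>
    exact (abs_real_inner_le_norm _ _).trans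
      (mul_le_of_le_one_left (norm_nonneg y) (norm_inv_norm_smul_le_one x))
  have hG : min 1 (p - 1)⁻¹ * φ ≤ G :=
    min_one_inv_mul_phiSecond_le hp hδ (norm_nonneg x) hδx
  have hφ : min 1 (p - 1)⁻¹ * φ ≤ φ :=
    mul_le_of_le_one_left (phiSecond_nonneg hp hδ (norm_nonneg x) hδx) (min_le_left _ _)
  rw [hDyy]
  nlinarith [mul_le_mul_of_nonneg_right hG (sub_nonneg.2 hs),
    mul_le_mul_of_nonneg_right hφ (sq_nonneg s)]

theorem norm_stressDeriv_le {p δ : ℝ} (hp : 1 < p) (hδ : 0 ≤ δ) {x : E}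
    (hδx : 0 < δ + ‖x‖) :
    ‖stressDeriv p δ x‖ ≤ 2 * max 1 (p - 1)⁻¹ * phiSecond p δ ‖x‖ := by
  set G := (δ + ‖x‖) ^ (p - 2)
  set φ := phiSecond p δ ‖x‖
  have hG0 : 0 ≤ G := Real.rpow_nonneg hδx.le _
  have hφ0 : 0 ≤ φ := phiSecond_nonneg hp hδ (norm_nonneg x) hδx
  have hn := norm_inv_norm_smul_le_one x
  calc ‖stressDeriv p δ x‖ ≤ G + |φ - G| := by
        refine (norm_add_le _ _).trans (add_le_add ?_ ?_)
        · rw [norm_smul, Real.norm_of_nonneg hG0]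
          exact mul_le_of_le_one_right hG0 ContinuousLinearMap.norm_id_le
        · rw [norm_smul, norm_rankOne, Real.norm_eq_abs]
          exact mul_le_of_le_one_right (abs_nonneg _) (mul_le_one₀ hn (norm_nonneg _) hn)
    _ ≤ 2 * max G φ := by
        have := le_max_left G φ
        have := le_max_right G φ
        cases abs_cases (φ - G) <;> linarith
    _ ≤ 2 * (max 1 (p - 1)⁻¹ * φ) := by
        gcongr
        exact max_le (rpow_le_max_one_inv_mul_phiSecond hp hδ (norm_nonneg x) hδx)
          (le_mul_of_one_le_left hφ0 (le_max_left _ _))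
    _ = 2 * max 1 (p - 1)⁻¹ * φ := by ring

end StressMap

section Matrices

noncomputable def sym3CLM : M3 →L[ℝ] M3 :=
  LinearMap.toContinuousLinearMap
    { toFun := sym3
      map_add' := fun A B => by
        funext i j
        simp only [sym3, Pi.add_apply]
        ring
      map_smul' := fun c A => by
        funext i j
        simp only [sym3, Pi.smul_apply, smul_eq_mul, RingHom.id_apply]
        ring }

theorem sym3_sym3 (A : M3) : sym3 (sym3 A) = sym3 A := by
  funext i j
  simp only [sym3]
  ring

theorem sym3_apply_comm (A : M3) (i j : Fin 3) : sym3 A j i = sym3 A i j := by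
  simp only [sym3, add_comm]

theorem dotF_sym3_left (A B : M3) : dotF (sym3 A) B = dotF A (sym3 B) := by
  have hswap : ∑ i, ∑ j, A j i * B i j = ∑ i, ∑ j, A i j * B j i := Finset.sum_comm
  have hl : dotF (sym3 A) B = ∑ i, ∑ j, (A i j * B i j + A j i * B i j) / 2 :=
    Finset.sum_congr rfl fun i _ => Finset.sum_congr rfl fun j _ => by simp only [sym3]; ring
  have hr : dotF A (sym3 B) = ∑ i, ∑ j, (A i j * B i j + A i j * B j i) / 2 :=
    Finset.sum_congr rfl fun i _ => Finset.sum_congr rfl fun j _ => by simp only [sym3]; ring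
  rw [hl, hr]
  simp only [← Finset.sum_div, Finset.sum_add_distrib, hswap]

theorem sym3_Smat (p δ : ℝ) (P : M3) : sym3 (Smat p δ P) = Smat p δ P := by
  funext i j
  show (Smat p δ P i j + Smat p δ P j i) / 2 = Smat p δ P i j
  simp only [Smat]
  rw [sym3_apply_comm P j i]
  ring

-- `M3` carries the sup norm; the Frobenius geometry lives on this copy.
noncomputable def frobEquiv : M3 ≃L[ℝ] EuclideanSpace ℝ (Fin 3 × Fin 3) :=
  ((LinearEquiv.curry ℝ ℝ (Fin 3) (Fin 3)).symm.trans
    (WithLp.linearEquiv 2 ℝ (Fin 3 × Fin 3 → ℝ)).symm).toContinuousLinearEquiv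

@[simp] theorem frobEquiv_apply (A : M3) (ij : Fin 3 × Fin 3) :
    frobEquiv A ij = A ij.1 ij.2 := rfl

theorem frob3_eq_norm (A : M3) : frob3 A = ‖frobEquiv A‖ := by
  simp [frob3, EuclideanSpace.norm_eq, Fintype.sum_prod_type]

theorem dotF_eq_inner (A B : M3) : dotF A B = ⟪frobEquiv A, frobEquiv B⟫ := by
  simp [dotF, PiLp.inner_apply, Fintype.sum_prod_type, mul_comm]

noncomputable def symFrob : M3 →L[ℝ] EuclideanSpace ℝ (Fin 3 × Fin 3) :=
  frobEquiv ∘L sym3CLM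

@[simp] theorem symFrob_apply (A : M3) : symFrob A = frobEquiv (sym3 A) := rfl

theorem symFrob_ne_zero {A : M3} (hA : sym3 A ≠ 0) : symFrob A ≠ 0 := by
  simpa using hA

theorem norm_symFrob_le (A : M3) : ‖symFrob A‖ ≤ ‖frobEquiv A‖ := by
  have h : ‖symFrob A‖ ^ 2 ≤ ‖symFrob A‖ * ‖frobEquiv A‖ :=
    calc ‖symFrob A‖ ^ 2 = ⟪symFrob A, frobEquiv A⟫ := by
          rw [← real_inner_self_eq_norm_sq, symFrob_apply, ← dotF_eq_inner,
            ← dotF_eq_inner, ← dotF_sym3_left, sym3_sym3]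
      _ ≤ ‖symFrob A‖ * ‖frobEquiv A‖ := real_inner_le_norm _ _
  nlinarith [norm_nonneg (symFrob A), norm_nonneg (frobEquiv A)]

theorem norm_frobEquiv_single (k l : Fin 3) :
    ‖frobEquiv (Pi.single k (Pi.single l 1))‖ = 1 := by
  have : frobEquiv (Pi.single k (Pi.single l 1)) = EuclideanSpace.single (k, l) 1 := by
    ext ⟨i, j⟩
    by_cases hi : i = k <;> by_cases hj : j = l <;> simp [hi, hj]
  rw [this, PiLp.norm_single, norm_one]

theorem Smat_eq_comp (p δ : ℝ) :
    Smat p δ = frobEquiv.symm ∘ stressMap p δ ∘ symFrob := by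
  funext P i j
  simp [Smat, stressMap, frob3_eq_norm]

end Matrices

section Smat

variable {δ : ℝ}

theorem contDiffOn_Smat (p : ℝ) (hδ : 0 ≤ δ) : ContDiffOn ℝ 1 (Smat p δ) {P | sym3 P ≠ 0} :=
  fun P hP => by
    rw [Smat_eq_comp]
    exact (frobEquiv.symm.contDiff.contDiffAt.comp P ((contDiffAt_stressMap p hδ
      (symFrob_ne_zero hP)).comp P symFrob.contDiff.contDiffAt)).contDiffWithinAt

theorem contDiff_Smat (p : ℝ) (hδ : 0 < δ) : ContDiff ℝ 1 (Smat p δ) := by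
  rw [Smat_eq_comp]
  exact frobEquiv.symm.contDiff.comp ((contDiff_stressMap p hδ).comp symFrob.contDiff)

theorem hasFDerivAt_Smat (p : ℝ) (hδ : 0 ≤ δ) {P : M3} (hP : sym3 P ≠ 0) :
    HasFDerivAt (Smat p δ) ((frobEquiv.symm : _ →L[ℝ] M3) ∘L
      stressDeriv p δ (symFrob P) ∘L symFrob) P := by
  rw [Smat_eq_comp]
  exact frobEquiv.symm.hasFDerivAt.comp P
    ((hasFDerivAt_stressMap p hδ (symFrob_ne_zero hP)).comp P symFrob.hasFDerivAt)

theorem frobEquiv_fderiv_Smat_apply (p : ℝ) (hδ : 0 ≤ δ) {P : M3} (hP : sym3 P ≠ 0)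
    (Q : M3) :
    frobEquiv (fderiv ℝ (Smat p δ) P Q)
      = stressDeriv p δ (symFrob P) (symFrob Q) := by
  simp [(hasFDerivAt_Smat p hδ hP).fderiv]

-- `S` takes values in symmetric matrices, hence so does its derivative.
theorem sym3_fderiv_Smat_apply (p : ℝ) (hδ : 0 ≤ δ) {P : M3} (hP : sym3 P ≠ 0)
    (Q : M3) :
    sym3 (fderiv ℝ (Smat p δ) P Q) = fderiv ℝ (Smat p δ) P Q := by
  have h := hasFDerivAt_Smat p hδ hP
  have hsym := sym3CLM.hasFDerivAt.comp P h
  rw [show sym3CLM ∘ Smat p δ = Smat p δ from funext (sym3_Smat p δ)] at hsym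
  rw [h.fderiv]
  exact (congrArg (fun L : M3 →L[ℝ] M3 => L Q) (h.unique hsym)).symm

theorem le_dotF_fderiv_Smat_apply_self {p : ℝ} (hp : 1 < p) (hδ : 0 ≤ δ) {P : M3}
    (hP : sym3 P ≠ 0) (Q : M3) :
    min 1 (p - 1)⁻¹ * phiSecond p δ (frob3 (sym3 P)) * frob3 (sym3 Q) ^ 2
      ≤ dotF (fderiv ℝ (Smat p δ) P Q) Q := by
  have hPpos : 0 < δ + ‖symFrob P‖ := by
    have := norm_pos_iff.2 (symFrob_ne_zero hP)
    positivity
  rw [← sym3_fderiv_Smat_apply p hδ hP, dotF_sym3_left, dotF_eq_inner,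
    frobEquiv_fderiv_Smat_apply p hδ hP]
  simpa [frob3_eq_norm] using le_inner_stressDeriv_apply_self hp hδ hPpos (symFrob Q)

theorem abs_fderiv_Smat_apply_single_le {p : ℝ} (hp : 1 < p) (hδ : 0 ≤ δ) {P : M3}
    (hP : sym3 P ≠ 0) (i j k l : Fin 3) :
    |fderiv ℝ (Smat p δ) P (Pi.single k (Pi.single l 1)) i j|
      ≤ 2 * max 1 (p - 1)⁻¹ * phiSecond p δ (frob3 (sym3 P)) := by
  have hPpos : 0 < δ + ‖symFrob P‖ := by
    have := norm_pos_iff.2 (symFrob_ne_zero hP)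
    positivity
  set e : M3 := Pi.single k (Pi.single l 1)
  have he : ‖symFrob e‖ ≤ 1 :=
    (norm_symFrob_le e).trans_eq (norm_frobEquiv_single k l)
  calc |fderiv ℝ (Smat p δ) P e i j|
      ≤ ‖frobEquiv (fderiv ℝ (Smat p δ) P e)‖ := by
        simpa using PiLp.norm_apply_le (frobEquiv (fderiv ℝ (Smat p δ) P e)) (i, j)
    _ = ‖stressDeriv p δ (symFrob P) (symFrob e)‖ := by
        rw [frobEquiv_fderiv_Smat_apply p hδ hP]
    _ ≤ ‖stressDeriv p δ (symFrob P)‖ :=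
        (ContinuousLinearMap.le_opNorm _ _).trans (mul_le_of_le_one_right (norm_nonneg _) he)
    _ ≤ 2 * max 1 (p - 1)⁻¹ * phiSecond p δ (frob3 (sym3 P)) := by
        simpa [frob3_eq_norm] using norm_stressDeriv_le hp hδ hPpos

end Smat

/-- For `p ∈ (1,∞)` there are `κ₀, κ₁ > 0` depending only on `p` (independent of `δ`)
such that, for each `δ ≥ 0`, the map `S(P) = (δ+|P^sym|)^{p−2} P^sym` is continuously
differentiable on `{P | P^sym ≠ 0}` (and on all of ℝ^{3×3} if `δ > 0`), and for all
`P` with `P^sym ≠ 0` and all `Q`: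
`∑ ∂_{kl}S_{ij}(P) Q_{ij} Q_{kl} ≥ κ₀·φ''(|P^sym|)·|Q^sym|²` and
`|∂_{kl}S_{ij}(P)| ≤ κ₁·φ''(|P^sym|)`; i.e., `S` has `(p,δ)`-structure with
characteristics depending only on `p`. -/
theorem S_has_p_delta_structure (p : ℝ) (hp : 1 < p) :
    ∃ κ₀ κ₁ : ℝ, 0 < κ₀ ∧ 0 < κ₁ ∧
      ∀ δ : ℝ, 0 ≤ δ →
        ContDiffOn ℝ 1 (Smat p δ) {P : M3 | sym3 P ≠ 0} ∧
        (0 < δ → ContDiff ℝ 1 (Smat p δ)) ∧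
        ∀ P : M3, sym3 P ≠ 0 →
          (∀ Q : M3,
            κ₀ * phiSecond p δ (frob3 (sym3 P)) * (frob3 (sym3 Q)) ^ 2
              ≤ dotF (fderiv ℝ (Smat p δ) P Q) Q) ∧
          (∀ i j k l : Fin 3,
            |fderiv ℝ (Smat p δ) P (Pi.single k (Pi.single l (1:ℝ))) i j|
              ≤ κ₁ * phiSecond p δ (frob3 (sym3 P))) := by
  have hκ : 0 < (p - 1)⁻¹ := inv_pos.2 (sub_pos.2 hp)
  refine ⟨min 1 (p - 1)⁻¹, 2 * max 1 (p - 1)⁻¹, lt_min one_pos hκ,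
    mul_pos two_pos (lt_max_of_lt_left one_pos), fun δ hδ => ⟨contDiffOn_Smat p hδ,
      fun hδ' => contDiff_Smat p hδ', fun P hP => ⟨le_dotF_fderiv_Smat_apply_self hp hδ hP,
        abs_fderiv_Smat_apply_single_le hp hδ hP⟩⟩⟩
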